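/- arXiv:2005.10670 — 2 statements merged into one kernel-verified Lean document; each statement's English description precedes it below -/
import Mathlib

section
/- Let D_f, D_q ⊂ ℝ³ be compact convex sets separated by a hyperplane with unit normal n, with dist(D_f, D_q) > 0, and let x̂ ∈ 𝕊² satisfy x̂·n ≥ 0. Then there is a constant δ > 0 (depending on D_f, D_q but not on x̂) such that for all y ∈ D_q and s ∈ D_f, |(s - y)/|s - y| − x̂| ≥ δ. -/
/-!
Compactness turns the strict separation into a quantitative one: the difference set
`D_f - D_q` is compact and lies in the open half-space `{v : ⟪v, -n⟫ > 0}`, so the unit vectors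
`(s - y)/|s - y|` have `⟪·, -n⟫ ≥ δ` for some `δ > 0`, while every `x̂` in the hemisphere has
`⟪x̂, -n⟫ ≤ 0`. Projecting onto the unit vector `-n` then gives `|(s - y)/|s - y| - x̂| ≥ δ`.
-/

open RealInnerProductSpace Pointwise

variable {E : Type*} [NormedAddCommGroup E] [InnerProductSpace ℝ E]

theorem IsCompact.exists_pos_le_inner_normalize {K : Set E} (hK : IsCompact K) {w : E}
    (hpos : ∀ v ∈ K, 0 < ⟪v, w⟫) : ∃ δ, 0 < δ ∧ ∀ v ∈ K, δ ≤ ⟪‖v‖⁻¹ • v, w⟫ := by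
  have hne : ∀ v ∈ K, v ≠ 0 := fun v hv h0 => by simpa [h0] using hpos v hv
  have hcont : ContinuousOn (fun v : E => ⟪‖v‖⁻¹ • v, w⟫) K :=
    ((continuousOn_id.norm.inv₀ fun v hv => norm_ne_zero_iff.2 (hne v hv)).smul
      continuousOn_id).inner continuousOn_const
  refine hK.exists_forall_le' hcont fun v hv => ?_
  rw [real_inner_smul_left]
  exact mul_pos (inv_pos.2 (norm_pos_iff.2 (hne v hv))) (hpos v hv)

theorem le_norm_sub_of_le_inner {u x w : E} {δ : ℝ} (hw : ‖w‖ ≤ 1) (hu : δ ≤ ⟪u, w⟫)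
    (hx : ⟪x, w⟫ ≤ 0) : δ ≤ ‖u - x‖ :=
  calc δ ≤ ⟪u - x, w⟫ := by rw [inner_sub_left]; linarith
    _ ≤ ‖u - x‖ * ‖w‖ := real_inner_le_norm _ _
    _ ≤ ‖u - x‖ := mul_le_of_le_one_right (norm_nonneg _) hw

theorem stmt12_general (Df Dq : Set (EuclideanSpace ℝ (Fin 3)))
    (hDfc : IsCompact Df) (hDqc : IsCompact Dq)
    (n : EuclideanSpace ℝ (Fin 3)) (hn : ‖n‖ = 1)
    (hsep : ∃ c : ℝ, (∀ x ∈ Df, (inner ℝ x n : ℝ) < c) ∧ (∀ y ∈ Dq, c < (inner ℝ y n : ℝ))) :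
    ∃ δ : ℝ, 0 < δ ∧ ∀ xhat : EuclideanSpace ℝ (Fin 3), ‖xhat‖ = 1 →
      0 ≤ (inner ℝ xhat n : ℝ) → ∀ y ∈ Dq, ∀ s ∈ Df,
        δ ≤ ‖(‖s - y‖⁻¹ • (s - y)) - xhat‖ := by
  obtain ⟨c, hf, hq⟩ := hsep
  have hdiff : ∀ v ∈ Df - Dq, 0 < ⟪v, -n⟫ := by
    rintro _ ⟨s, hs, y, hy, rfl⟩
    rw [inner_neg_right, inner_sub_left]
    linarith [hf s hs, hq y hy]
  have hK : IsCompact (Df - Dq) := sub_eq_add_neg Df Dq ▸ hDfc.add hDqc.neg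
  obtain ⟨δ, hδ, hle⟩ := hK.exists_pos_le_inner_normalize hdiff
  refine ⟨δ, hδ, fun xhat _ hxn y hy s hs => ?_⟩
  exact le_norm_sub_of_le_inner (by rw [norm_neg, hn]) (hle _ (Set.sub_mem_sub hs hy))
    (by rwa [inner_neg_right, neg_nonpos])

/-- Uniform lower bound on `|∇_y φ| = |(s-y)/|s-y| - x̂|` over `y ∈ D_q`, `s ∈ D_f` and
all observation directions `x̂` in the closed hemisphere `{x̂ : x̂·n ≥ 0}`, where `n` is
the unit normal of a hyperplane separating `D_f` from `D_q`. -/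
theorem stmt12 (Df Dq : Set (EuclideanSpace ℝ (Fin 3)))
    (hDf : Convex ℝ Df) (hDq : Convex ℝ Dq)
    (hDfc : IsCompact Df) (hDqc : IsCompact Dq)
    (n : EuclideanSpace ℝ (Fin 3)) (hn : ‖n‖ = 1)
    (hsep : ∃ c : ℝ, (∀ x ∈ Df, (inner ℝ x n : ℝ) < c) ∧ (∀ y ∈ Dq, c < (inner ℝ y n : ℝ)))
    (hdist : 0 < ⨅ (x : Df) (y : Dq), ‖(x : EuclideanSpace ℝ (Fin 3)) - y‖) :
    ∃ δ : ℝ, 0 < δ ∧ ∀ xhat : EuclideanSpace ℝ (Fin 3), ‖xhat‖ = 1 →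
      0 ≤ (inner ℝ xhat n : ℝ) → ∀ y ∈ Dq, ∀ s ∈ Df,
        δ ≤ ‖(‖s - y‖⁻¹ • (s - y)) - xhat‖ :=
  stmt12_general Df Dq hDfc hDqc n hn hsep
end

section
/- Let D ⊂ ℝ³ be bounded with diameter d. Then for every x ∈ ℝ³, the double integral ∬_{D×D} |x−z|^{−1} |y−z|^{−2} |x−y|^{−1} dz dy is finite and bounded by C ⟨x⟩^{−2}, where C depends only on D and ⟨x⟩ = (1+|x|²)^{1/2}. -/
/-!
Everything reduces to the uniform one-singularity bound `∫_D |a - z|⁻² dz ≤ K` for all `a`,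
which holds because `|w|⁻²` is integrable near `0` in `ℝ³` and is at most `1` away from it.
For bounded `x`, the AM-GM inequality `|x-z|⁻¹ |x-y|⁻¹ ≤ |x-z|⁻² + |x-y|⁻²` splits the kernel
into two products of one-singularity kernels, each of which integrates (by Tonelli) to at
most `K²`. For `|x| ≥ 2R`, where `D ⊆ B(0, R)`, both `|x - z|` and `|x - y|` are at least
`|x| / 2` on `D`, so the double integral is at most `4 K |D| / |x|²`.
-/

open MeasureTheory Metric
open scoped ENNReal

section RieszPotential

variable {E : Type*} [NormedAddCommGroup E] [NormedSpace ℝ E] [FiniteDimensional ℝ E]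
  [MeasurableSpace E] [BorelSpace E] {μ : Measure E} [μ.IsAddHaarMeasure] {α : ℝ}

theorem setLIntegral_ball_norm_rpow_neg_lt_top (hα₀ : 0 ≤ α) (hα : α < Module.finrank ℝ E)
    (r : ℝ) : ∫⁻ w in ball 0 r, ENNReal.ofReal (‖w‖ ^ (-α)) ∂μ < ∞ := by
  have hd : 1 ≤ Module.finrank ℝ E := by
    have : (0 : ℝ) < Module.finrank ℝ E := hα₀.trans_lt hα
    exact_mod_cast this
  refine IntegrableOn.setLIntegral_lt_top (integrableOn_ball_of_norm_le_rpow (C := 1) hd hα ?_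
    (measurable_norm.pow_const _).aestronglyMeasurable)
  filter_upwards with w
  rw [Real.norm_of_nonneg (Real.rpow_nonneg (norm_nonneg w) _), one_mul]

theorem setLIntegral_norm_sub_rpow_neg_le (hα₀ : 0 ≤ α) (D : Set E) (a : E) :
    ∫⁻ z in D, ENNReal.ofReal (‖a - z‖ ^ (-α)) ∂μ ≤
      μ D + ∫⁻ w in ball 0 1, ENNReal.ofReal (‖w‖ ^ (-α)) ∂μ := by
  set g : E → ℝ≥0∞ := fun w => ENNReal.ofReal (‖w‖ ^ (-α))
  have hg : Measurable g := (measurable_norm.pow_const _).ennreal_ofReal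
  have h_split : ∀ w, g w ≤ (ball 0 1).indicator g w + 1 := by
    intro w
    by_cases hw : w ∈ ball (0 : E) 1
    · rw [Set.indicator_of_mem hw]
      exact le_self_add
    · rw [Set.indicator_of_notMem hw, zero_add, ← ENNReal.ofReal_one]
      refine ENNReal.ofReal_le_ofReal (Real.rpow_le_one_of_one_le_of_nonpos ?_ (by linarith))
      simpa using hw
  calc ∫⁻ z in D, g (a - z) ∂μ
      ≤ ∫⁻ z in D, ((ball 0 1).indicator g (a - z) + 1) ∂μ :=
        lintegral_mono fun z => h_split (a - z)
    _ = ∫⁻ z in D, (ball 0 1).indicator g (a - z) ∂μ + μ D := by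
        rw [lintegral_add_right _ measurable_const, setLIntegral_one]
    _ ≤ ∫⁻ z, (ball 0 1).indicator g (a - z) ∂μ + μ D := by
        gcongr
        exact Measure.restrict_le_self
    _ = μ D + ∫⁻ w in ball 0 1, g w ∂μ := by
        rw [lintegral_sub_left_eq_self, lintegral_indicator measurableSet_ball, add_comm]

theorem exists_setLIntegral_norm_sub_rpow_neg_le (hα₀ : 0 ≤ α)
    (hα : α < Module.finrank ℝ E) {D : Set E} (hD : μ D ≠ ∞) :
    ∃ K ≠ ∞, ∀ a, ∫⁻ z in D, ENNReal.ofReal (‖a - z‖ ^ (-α)) ∂μ ≤ K :=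
  ⟨_, ENNReal.add_ne_top.2 ⟨hD, (setLIntegral_ball_norm_rpow_neg_lt_top hα₀ hα 1).ne⟩,
    setLIntegral_norm_sub_rpow_neg_le hα₀ D⟩

end RieszPotential

theorem inv_norm_sub_le_two_mul_inv_norm {E : Type*} [SeminormedAddCommGroup E] {x w : E}
    {R : ℝ} (hw : ‖w‖ ≤ R) (hx : 2 * R ≤ ‖x‖) (hx₀ : 0 < ‖x‖) : ‖x - w‖⁻¹ ≤ 2 * ‖x‖⁻¹ := by
  have : ‖x‖ / 2 ≤ ‖x - w‖ := by linarith [norm_sub_norm_le x w]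
  calc ‖x - w‖⁻¹ ≤ (‖x‖ / 2)⁻¹ := inv_anti₀ (by positivity) this
    _ = 2 * ‖x‖⁻¹ := by rw [inv_div, div_eq_mul_inv]

section SingularDoubleIntegral

variable {E : Type*} [NormedAddCommGroup E] [MeasurableSpace E] {μ : Measure E} {D : Set E}
  {K : ℝ≥0∞}

noncomputable def singularDoubleIntegral (μ : Measure E) (D : Set E) (x : E) : ℝ≥0∞ :=
  ∫⁻ y in D, ∫⁻ z in D, ENNReal.ofReal (‖x - z‖⁻¹ * (‖y - z‖ ^ 2)⁻¹ * ‖x - y‖⁻¹) ∂μ ∂μ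

theorem singularDoubleIntegral_le_two_mul_sq [BorelSpace E] [SecondCountableTopology E]
    [SFinite μ]
    (hK : ∀ a, ∫⁻ z in D, ENNReal.ofReal ((‖a - z‖ ^ 2)⁻¹) ∂μ ≤ K) (x : E) :
    singularDoubleIntegral μ D x ≤ 2 * K * K := by
  set q : E → E → ℝ≥0∞ := fun a b => ENNReal.ofReal ((‖a - b‖ ^ 2)⁻¹)
  have hq : Measurable (Function.uncurry q) :=
    ((measurable_fst.sub measurable_snd).norm.pow_const 2).inv.ennreal_ofReal
  have hq_left (a : E) : Measurable (q a) := hq.comp measurable_prodMk_left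
  have hq_right (b : E) : Measurable (q · b) := hq.comp measurable_prodMk_right
  have hq_xz : Measurable fun p : E × E => q x p.2 * q p.1 p.2 :=
    (hq.comp (measurable_const.prodMk measurable_snd)).mul hq
  have hK' (b : E) : ∫⁻ a in D, q a b ∂μ ≤ K := by
    simpa only [q, norm_sub_rev] using hK b
  have h_amgm (y z : E) : ENNReal.ofReal (‖x - z‖⁻¹ * (‖y - z‖ ^ 2)⁻¹ * ‖x - y‖⁻¹) ≤
      q x z * q y z + q x y * q y z := by
    simp only [q, ← ENNReal.ofReal_mul (inv_nonneg.2 (sq_nonneg _))]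
    refine (ENNReal.ofReal_le_ofReal ?_).trans ENNReal.ofReal_add_le
    set s := (‖y - z‖ ^ 2)⁻¹
    have h_uv : ‖x - z‖⁻¹ * ‖x - y‖⁻¹ ≤ ‖x - z‖⁻¹ ^ 2 + ‖x - y‖⁻¹ ^ 2 := by
      nlinarith [two_mul_le_add_sq ‖x - z‖⁻¹ ‖x - y‖⁻¹,
        mul_nonneg (inv_nonneg.2 (norm_nonneg (x - z))) (inv_nonneg.2 (norm_nonneg (x - y)))]
    calc ‖x - z‖⁻¹ * s * ‖x - y‖⁻¹ = ‖x - z‖⁻¹ * ‖x - y‖⁻¹ * s := by ring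
      _ ≤ (‖x - z‖⁻¹ ^ 2 + ‖x - y‖⁻¹ ^ 2) * s := by gcongr
      _ = (‖x - z‖ ^ 2)⁻¹ * s + (‖x - y‖ ^ 2)⁻¹ * s := by rw [inv_pow, inv_pow, add_mul]
  have h_first : ∫⁻ y in D, ∫⁻ z in D, q x z * q y z ∂μ ∂μ ≤ K * K := by
    rw [lintegral_lintegral_swap hq_xz.aemeasurable]
    calc ∫⁻ z in D, ∫⁻ y in D, q x z * q y z ∂μ ∂μ
        = ∫⁻ z in D, q x z * ∫⁻ y in D, q y z ∂μ ∂μ :=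
          lintegral_congr fun z => lintegral_const_mul _ (hq_right z)
      _ ≤ ∫⁻ z in D, q x z * K ∂μ := by gcongr with z; exact hK' z
      _ ≤ K * K := by rw [lintegral_mul_const _ (hq_left x)]; gcongr; exact hK x
  have h_second : ∫⁻ y in D, ∫⁻ z in D, q x y * q y z ∂μ ∂μ ≤ K * K :=
    calc ∫⁻ y in D, ∫⁻ z in D, q x y * q y z ∂μ ∂μ
        = ∫⁻ y in D, q x y * ∫⁻ z in D, q y z ∂μ ∂μ :=
          lintegral_congr fun y => lintegral_const_mul _ (hq_left y)
      _ ≤ ∫⁻ y in D, q x y * K ∂μ := by gcongr with y; exact hK y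
      _ ≤ K * K := by rw [lintegral_mul_const _ (hq_left x)]; gcongr; exact hK x
  calc singularDoubleIntegral μ D x
      ≤ ∫⁻ y in D, ∫⁻ z in D, (q x z * q y z + q x y * q y z) ∂μ ∂μ :=
        lintegral_mono fun y => lintegral_mono fun z => h_amgm y z
    _ = ∫⁻ y in D, ∫⁻ z in D, q x z * q y z ∂μ ∂μ +
          ∫⁻ y in D, ∫⁻ z in D, q x y * q y z ∂μ ∂μ := by
        rw [← lintegral_add_left]
        · exact lintegral_congr fun y => lintegral_add_left ((hq_left x).mul (hq_left y)) _
        · exact hq_xz.lintegral_prod_right'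
    _ ≤ 2 * K * K := by
        rw [mul_assoc, two_mul]
        gcongr

theorem singularDoubleIntegral_le_of_subset_closedBall [BorelSpace E]
    (hK : ∀ a, ∫⁻ z in D, ENNReal.ofReal ((‖a - z‖ ^ 2)⁻¹) ∂μ ≤ K) {R : ℝ}
    (hDR : D ⊆ closedBall 0 R) {x : E} (hx : 2 * R ≤ ‖x‖) (hx₀ : 0 < ‖x‖) :
    singularDoubleIntegral μ D x ≤ 4 * K * μ D * ENNReal.ofReal ((‖x‖ ^ 2)⁻¹) := by
  set c := 4 * ENNReal.ofReal ((‖x‖ ^ 2)⁻¹)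
  have h_far {w : E} (hw : w ∈ D) : ‖x - w‖⁻¹ ≤ 2 * ‖x‖⁻¹ :=
    inv_norm_sub_le_two_mul_inv_norm (by simpa using hDR hw) hx hx₀
  have h_kernel {y z : E} (hy : y ∈ D) (hz : z ∈ D) :
      ENNReal.ofReal (‖x - z‖⁻¹ * (‖y - z‖ ^ 2)⁻¹ * ‖x - y‖⁻¹) ≤
        c * ENNReal.ofReal ((‖y - z‖ ^ 2)⁻¹) := by
    have : ‖x - z‖⁻¹ * (‖y - z‖ ^ 2)⁻¹ * ‖x - y‖⁻¹ ≤ 4 * (‖x‖ ^ 2)⁻¹ * (‖y - z‖ ^ 2)⁻¹ :=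
      calc ‖x - z‖⁻¹ * (‖y - z‖ ^ 2)⁻¹ * ‖x - y‖⁻¹
          ≤ 2 * ‖x‖⁻¹ * (‖y - z‖ ^ 2)⁻¹ * (2 * ‖x‖⁻¹) := by
            gcongr
            exacts [h_far hz, h_far hy]
        _ = 4 * (‖x‖ ^ 2)⁻¹ * (‖y - z‖ ^ 2)⁻¹ := by ring
    refine (ENNReal.ofReal_le_ofReal this).trans_eq ?_
    rw [ENNReal.ofReal_mul (by positivity), ENNReal.ofReal_mul zero_le_four,
      ENNReal.ofReal_ofNat]
  have h_inner {y : E} (hy : y ∈ D) :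
      ∫⁻ z in D, ENNReal.ofReal (‖x - z‖⁻¹ * (‖y - z‖ ^ 2)⁻¹ * ‖x - y‖⁻¹) ∂μ ≤ c * K :=
    calc ∫⁻ z in D, ENNReal.ofReal (‖x - z‖⁻¹ * (‖y - z‖ ^ 2)⁻¹ * ‖x - y‖⁻¹) ∂μ
        ≤ ∫⁻ z in D, c * ENNReal.ofReal ((‖y - z‖ ^ 2)⁻¹) ∂μ :=
          setLIntegral_mono (by fun_prop) fun z hz => h_kernel hy hz
      _ ≤ c * K := by
          rw [lintegral_const_mul _ (by fun_prop)]
          gcongr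
          exact hK y
  calc singularDoubleIntegral μ D x ≤ ∫⁻ _ in D, c * K ∂μ :=
        setLIntegral_mono measurable_const fun y hy => h_inner hy
    _ = 4 * K * μ D * ENNReal.ofReal ((‖x‖ ^ 2)⁻¹) := by
        rw [setLIntegral_const]
        ring

end SingularDoubleIntegral

theorem exists_le_ofReal_mul_inv_one_add_sq {E : Type*} [SeminormedAddGroup E] (f : E → ℝ≥0∞)
    {A B : ℝ≥0∞} (hA : A ≠ ∞) (hB : B ≠ ∞) {T : ℝ} (h_near : ∀ x, f x ≤ A)
    (h_far : ∀ x, T ≤ ‖x‖ → f x ≤ B * ENNReal.ofReal ((‖x‖ ^ 2)⁻¹)) :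
    ∃ C : ℝ, ∀ x, f x ≤ ENNReal.ofReal (C * (1 + ‖x‖ ^ 2)⁻¹) := by
  set T' := max T 1
  refine ⟨A.toReal * (1 + T' ^ 2) + 2 * B.toReal, fun x => ?_⟩
  have hA₀ : 0 ≤ A.toReal := ENNReal.toReal_nonneg
  have hB₀ : 0 ≤ B.toReal := ENNReal.toReal_nonneg
  have h_pos : 0 < 1 + ‖x‖ ^ 2 := by positivity
  rw [← div_eq_mul_inv]
  rcases le_total ‖x‖ T' with h_le | h_ge
  · refine ((h_near x).trans_eq (ENNReal.ofReal_toReal hA).symm).trans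
      (ENNReal.ofReal_le_ofReal ((le_div_iff₀ h_pos).2 ?_))
    have : ‖x‖ ^ 2 ≤ T' ^ 2 := pow_le_pow_left₀ (norm_nonneg x) h_le 2
    nlinarith
  · have h_one : 1 ≤ ‖x‖ := (le_max_right T 1).trans h_ge
    calc f x ≤ B * ENNReal.ofReal ((‖x‖ ^ 2)⁻¹) := h_far x ((le_max_left T 1).trans h_ge)
      _ = ENNReal.ofReal (B.toReal / ‖x‖ ^ 2) := by
        rw [div_eq_mul_inv, ENNReal.ofReal_mul hB₀, ENNReal.ofReal_toReal hB]
      _ ≤ _ := ENNReal.ofReal_le_ofReal ((div_le_div_iff₀ (by positivity) h_pos).2 ?_)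
    nlinarith [mul_le_mul_of_nonneg_left (one_le_pow₀ h_one : 1 ≤ ‖x‖ ^ 2) hB₀,
      mul_nonneg hA₀ (by positivity : (0 : ℝ) ≤ (1 + T' ^ 2) * ‖x‖ ^ 2)]

theorem stmt16_general (D : Set (EuclideanSpace ℝ (Fin 3))) (hD : Bornology.IsBounded D) :
    ∃ C : ℝ, ∀ x : EuclideanSpace ℝ (Fin 3),
      (∫⁻ y in D, ∫⁻ z in D,
          ENNReal.ofReal (‖x - z‖⁻¹ * (‖y - z‖ ^ 2)⁻¹ * ‖x - y‖⁻¹)) ≤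
        ENNReal.ofReal (C * (1 + ‖x‖ ^ 2)⁻¹) := by
  obtain ⟨R, hDR⟩ := hD.subset_closedBall 0
  obtain ⟨K, hK_ne_top, hK⟩ := exists_setLIntegral_norm_sub_rpow_neg_le
    (μ := volume) (E := EuclideanSpace ℝ (Fin 3)) zero_le_two (by norm_num)
    hD.measure_lt_top.ne
  simp only [Real.rpow_neg (norm_nonneg _), Real.rpow_two] at hK
  exact exists_le_ofReal_mul_inv_one_add_sq (singularDoubleIntegral volume D)
    (A := 2 * K * K) (B := 4 * K * volume D) (T := max (2 * R) 1) (by finiteness)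
    (ENNReal.mul_ne_top (ENNReal.mul_ne_top (by simp) hK_ne_top) hD.measure_lt_top.ne)
    (singularDoubleIntegral_le_two_mul_sq hK) fun x hx =>
    singularDoubleIntegral_le_of_subset_closedBall hK hDR (le_of_max_le_left hx)
      (zero_lt_one.trans_le (le_of_max_le_right hx))

/-- For a bounded set `D ⊂ ℝ³`, the double integral
`∬_{D×D} |x-z|⁻¹ |y-z|⁻² |x-y|⁻¹ dz dy` is finite and bounded by `C ⟨x⟩⁻²`. -/
theorem stmt16 (D : Set (EuclideanSpace ℝ (Fin 3))) (hD : Bornology.IsBounded D)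
    (hDm : MeasurableSet D) :
    ∃ C : ℝ, ∀ x : EuclideanSpace ℝ (Fin 3),
      (∫⁻ y in D, ∫⁻ z in D,
          ENNReal.ofReal (‖x - z‖⁻¹ * (‖y - z‖ ^ 2)⁻¹ * ‖x - y‖⁻¹)) ≤
        ENNReal.ofReal (C * (1 + ‖x‖ ^ 2)⁻¹) :=
  stmt16_general D hD
end
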